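/- arXiv:1512.00585 — 2 statements merged into one kernel-verified Lean document; each statement's English description precedes it below -/
import Mathlib

section
/- There exists a constant C > 0, depending only on ν and K, such that for every ξ ∈ ℝ³ with ξ ≠ 0 and every ξ_* ∈ ℝ³, ∫_{𝕊²} b((ξ/|ξ|)·σ) (1 − (ξ/|ξ|)·σ) 𝟙_{|ξ − |ξ|σ| ≤ ⟨ξ_*⟩} dσ ≤ C min{ 1, (⟨ξ_*⟩/⟨ξ⟩)^{2-ν} }. -/
open MeasureTheory Filter
open scoped Topology ENNReal InnerProductSpace FourierTransform

noncomputable section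

/-- Velocity space `ℝ³`. -/
abbrev V3 : Type := EuclideanSpace ℝ (Fin 3)

/-- Japanese bracket `⟨v⟩ = (1+|v|²)^{1/2}`. -/
def jap (v : V3) : ℝ := Real.sqrt (1 + ‖v‖ ^ 2)

/-- Normalized Maxwellian `μ(v) = (2π)^{-3/2} exp(-|v|²/2)`. -/
def maxw (v : V3) : ℝ := (2 * Real.pi) ^ (-(3 : ℝ) / 2) * Real.exp (-‖v‖ ^ 2 / 2)

/-- Surface measure on the unit sphere `𝕊² ⊂ ℝ³` (2-dimensional Hausdorff measure). -/
def sphereMeasure : Measure V3 := (μH[2] : Measure V3).restrict (Metric.sphere (0 : V3) 1)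

/-- Post-collisional velocity `v' = (v+v_*)/2 + (|v-v_*|/2)σ`. -/
def vPost (v vs σ : V3) : V3 := (2 : ℝ)⁻¹ • (v + vs) + (‖v - vs‖ / 2) • σ

/-- Post-collisional velocity `v'_* = (v+v_*)/2 - (|v-v_*|/2)σ`. -/
def vPostS (v vs σ : V3) : V3 := (2 : ℝ)⁻¹ • (v + vs) - (‖v - vs‖ / 2) • σ

/-- Deviation angle `θ`, `cos θ = ((v-v_*)/|v-v_*|)·σ`. -/
def dev (v vs σ : V3) : ℝ := Real.arccos ⟪‖v - vs‖⁻¹ • (v - vs), σ⟫_ℝ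

/-- Collision kernel `B(v-v_*,σ) = |v-v_*|^γ b(((v-v_*)/|v-v_*|)·σ)`. -/
def Bker (γ : ℝ) (b : ℝ → ℝ) (v vs σ : V3) : ℝ :=
  ‖v - vs‖ ^ γ * b ⟪‖v - vs‖⁻¹ • (v - vs), σ⟫_ℝ

/-- Angular-truncated trilinear pairing `∭_{θ ≥ ε} Bf (F'_* G' - F_* G) h`. -/
def QTrunc (Bf : V3 → V3 → V3 → ℝ) (F G h : V3 → ℝ) (ε : ℝ) : ℝ :=
  ∫ v : V3, ∫ vs : V3, ∫ σ : V3,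
    (if ε ≤ dev v vs σ then
        Bf v vs σ * (F (vPostS v vs σ) * G (vPost v vs σ) - F vs * G v) * h v
      else 0) ∂sphereMeasure

/-- Truncated pairing defining `⟨Γ(f,g), h⟩`. -/
def GammaTrunc (γ : ℝ) (b : ℝ → ℝ) (f g h : V3 → ℝ) (ε : ℝ) : ℝ :=
  QTrunc (fun v vs σ => Bker γ b v vs σ * Real.sqrt (maxw vs)) f g h ε

/-- Truncated pairing defining `⟨Q_c(F,G), h⟩` (kinetic factor cut off by `φ₀`). -/
def QcTrunc (γ : ℝ) (b φ₀ : ℝ → ℝ) (F G h : V3 → ℝ) (ε : ℝ) : ℝ :=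
  QTrunc (fun v vs σ => φ₀ ‖v - vs‖ * Bker γ b v vs σ) F G h ε

/-- Weighted `L²` norm `‖⟨·⟩^ℓ f‖_{L²}`. -/
def L2w (ℓ : ℝ) (f : V3 → ℝ) : ℝ :=
  (∫ v : V3, jap v ^ (2 * ℓ) * f v ^ 2) ^ ((1 : ℝ) / 2)

/-- Square of the non-isotropic triple norm (as an extended real). -/
def tripleNormSqE (γ : ℝ) (b : ℝ → ℝ) (f : V3 → ℝ) : ℝ≥0∞ :=
  (∫⁻ v : V3, ∫⁻ vs : V3, ∫⁻ σ : V3,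
      ENNReal.ofReal (Bker γ b v vs σ * maxw vs * (f (vPost v vs σ) - f v) ^ 2) ∂sphereMeasure)
    + ∫⁻ v : V3, ∫⁻ vs : V3, ∫⁻ σ : V3,
        ENNReal.ofReal (Bker γ b v vs σ * f vs ^ 2 *
          (Real.sqrt (maxw (vPost v vs σ)) - Real.sqrt (maxw v)) ^ 2) ∂sphereMeasure

/-- The triple norm `|||f|||`. -/
def tripleNorm (γ : ℝ) (b : ℝ → ℝ) (f : V3 → ℝ) : ℝ :=
  Real.sqrt (tripleNormSqE γ b f).toReal

/-- Dissipation functional `𝒟(F,φ) = ∭ B F_* (φ - φ')²`. -/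
def Ddiss (γ : ℝ) (b : ℝ → ℝ) (F φ : V3 → ℝ) : ℝ :=
  (∫⁻ v : V3, ∫⁻ vs : V3, ∫⁻ σ : V3,
      ENNReal.ofReal (Bker γ b v vs σ * F vs * (φ v - φ (vPost v vs σ)) ^ 2) ∂sphereMeasure).toReal

/-- Weighted Sobolev norm `‖f‖_{H^s_ℓ}`. -/
def sobNorm (s ℓ : ℝ) (f : V3 → ℝ) : ℝ :=
  (∫ ξ : V3, jap ξ ^ (2 * s) * ‖𝓕 (fun v : V3 => ((jap v ^ ℓ * f v : ℝ) : ℂ)) ξ‖ ^ 2) ^ ((1 : ℝ) / 2)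

/-- Standing assumptions on the angular kernel `b`. -/
def KernelHyp (ν K : ℝ) (b : ℝ → ℝ) : Prop :=
  Measurable b ∧ (∀ t, 0 ≤ b t) ∧ (∀ t < (0 : ℝ), b t = 0) ∧
    ∀ θ ∈ Set.Ioc (0 : ℝ) (Real.pi / 2),
      K⁻¹ * θ ^ (-2 - ν) ≤ b (Real.cos θ) ∧ b (Real.cos θ) ≤ K * θ ^ (-2 - ν)

/-! Put `n = ξ/|ξ|` and `u = 1 - n·σ`. Since `θ² ≥ 2u` for the deviation angle `θ`, the angular
bound gives `b(1-u) u ≤ K u^{-ν/2}`; and since `|ξ - |ξ|σ|² = 2|ξ|²u` while `b` vanishes for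
`u > 1`, the integrand vanishes unless `0 < u ≤ T := 2 min{1, (⟨ξ_*⟩/⟨ξ⟩)²}`. The set
`{0 < u ≤ h}` is a spherical cap of chordal radius `√(2h)`, whose area is `O(h)`: the sphere is
covered by six patches `±σ_i ≥ 1/√3`, on each of which dropping the `i`-th coordinate is
bi-Lipschitz onto a planar set. Summing over the dyadic shells `T/2^{k+1} < u ≤ T/2^k` then gives
`∫ u^{-ν/2} ≲ T^{1-ν/2}`, the geometric series converging because `ν < 2`. -/

open Metric Set

theorem hausdorffMeasure_le_mul_image_of_dist_le_mul {X Y : Type*} [MetricSpace X]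
    [MeasurableSpace X] [BorelSpace X] [MetricSpace Y] [MeasurableSpace Y] [BorelSpace Y]
    {f : X → Y} {s : Set X} {K : NNReal}
    (hf : ∀ x ∈ s, ∀ y ∈ s, dist x y ≤ K * dist (f x) (f y)) {d : ℝ} (hd : 0 ≤ d) :
    μH[d] s ≤ (K : ℝ≥0∞) ^ d * μH[d] (f '' s) := by
  rcases s.eq_empty_or_nonempty with rfl | ⟨x₀, -⟩
  · simp
  have : Nonempty X := ⟨x₀⟩
  have hinj : InjOn f s := fun x hx y hy hxy =>
    dist_le_zero.1 (by simpa [hxy] using hf x hx y hy)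
  have hlip : LipschitzOnWith K (Function.invFunOn f s) (f '' s) := by
    refine LipschitzOnWith.of_dist_le_mul ?_
    rintro _ ⟨x, hx, rfl⟩ _ ⟨y, hy, rfl⟩
    rw [hinj.leftInvOn_invFunOn hx, hinj.leftInvOn_invFunOn hy]
    exact hf x hx y hy
  simpa [hinj.invFunOn_image subset_rfl] using hlip.hausdorffMeasure_image_le hd

theorem rpow_neg_div_two_pow_mul_div_two_pow {p T : ℝ} (hT : 0 < T) (k : ℕ) :
    (T / 2 ^ (k + 1)) ^ (-p) * (T / 2 ^ k) = 2 ^ p * T ^ (1 - p) * (2 ^ (p - 1)) ^ k := by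
  rw [Real.rpow_neg (by positivity), Real.div_rpow hT.le (by positivity),
    ← Real.rpow_pow_comm zero_le_two, Real.rpow_sub_one two_ne_zero,
    Real.rpow_sub hT, Real.rpow_one, div_pow]
  field_simp
  exact pow_succ' _ _

theorem setLIntegral_rpow_neg_le_of_measure_le {α : Type*} [MeasurableSpace α] (μ : Measure α)
    {u : α → ℝ} {p C T : ℝ} (hp0 : 0 ≤ p) (hp1 : p < 1) (hC : 0 ≤ C) (hT : 0 < T)
    (hμ : ∀ h, 0 < h → h ≤ T → μ (u ⁻¹' Ioc 0 h) ≤ ENNReal.ofReal (C * h)) :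
    ∫⁻ x in u ⁻¹' Ioc 0 T, ENNReal.ofReal (u x ^ (-p)) ∂μ ≤
      ENNReal.ofReal (C * 2 ^ p / (1 - 2 ^ (p - 1)) * T ^ (1 - p)) := by
  have hr0 : (0 : ℝ) ≤ 2 ^ (p - 1) := by positivity
  have hr1 : (2 : ℝ) ^ (p - 1) < 1 := Real.rpow_lt_one_of_one_lt_of_neg one_lt_two (by linarith)
  set S : ℕ → Set α := fun k => {x | T / 2 ^ (k + 1) < u x ∧ u x ≤ T / 2 ^ k}
  have hcover : u ⁻¹' Ioc 0 T ⊆ ⋃ k, S k := by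
    rintro x ⟨hx0, hxT⟩
    obtain ⟨k, hk, hk'⟩ := exists_nat_pow_near ((one_le_div hx0).2 hxT) one_lt_two
    refine mem_iUnion.2 ⟨k, ?_, ?_⟩
    · rwa [div_lt_iff₀ (by positivity), mul_comm, ← div_lt_iff₀ hx0]
    · rwa [le_div_iff₀ (by positivity), mul_comm, ← le_div_iff₀ hx0]
  have hshell : ∀ k, ∫⁻ x in S k, ENNReal.ofReal (u x ^ (-p)) ∂μ ≤
      ENNReal.ofReal (C * 2 ^ p * T ^ (1 - p) * (2 ^ (p - 1)) ^ k) := by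
    intro k
    have hk : 0 < T / 2 ^ (k + 1) := by positivity
    calc ∫⁻ x in S k, ENNReal.ofReal (u x ^ (-p)) ∂μ
        ≤ ∫⁻ _ in S k, ENNReal.ofReal ((T / 2 ^ (k + 1)) ^ (-p)) ∂μ :=
          setLIntegral_mono measurable_const fun x hx => ENNReal.ofReal_le_ofReal <|
            Real.rpow_le_rpow_of_nonpos hk hx.1.le (neg_nonpos.2 hp0)
      _ ≤ ENNReal.ofReal ((T / 2 ^ (k + 1)) ^ (-p)) * ENNReal.ofReal (C * (T / 2 ^ k)) := by
          rw [setLIntegral_const]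
          gcongr
          have hsub : S k ⊆ u ⁻¹' Ioc 0 (T / 2 ^ k) := fun x hx => ⟨hk.trans hx.1, hx.2⟩
          exact (measure_mono hsub).trans
            (hμ _ (by positivity) (div_le_self hT.le (one_le_pow₀ one_le_two)))
      _ = ENNReal.ofReal (C * 2 ^ p * T ^ (1 - p) * (2 ^ (p - 1)) ^ k) := by
          rw [← ENNReal.ofReal_mul (by positivity), mul_left_comm,
            rpow_neg_div_two_pow_mul_div_two_pow hT]
          congr 1
          ring
  calc ∫⁻ x in u ⁻¹' Ioc 0 T, ENNReal.ofReal (u x ^ (-p)) ∂μ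
      ≤ ∫⁻ x in ⋃ k, S k, ENNReal.ofReal (u x ^ (-p)) ∂μ := lintegral_mono_set hcover
    _ ≤ ∑' k, ∫⁻ x in S k, ENNReal.ofReal (u x ^ (-p)) ∂μ := lintegral_iUnion_le _ _
    _ ≤ ∑' k, ENNReal.ofReal (C * 2 ^ p * T ^ (1 - p) * (2 ^ (p - 1)) ^ k) :=
        ENNReal.tsum_le_tsum hshell
    _ = ENNReal.ofReal (C * 2 ^ p / (1 - 2 ^ (p - 1)) * T ^ (1 - p)) := by
        rw [← ENNReal.ofReal_tsum_of_nonneg (fun k => by positivity)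
          ((summable_geometric_of_lt_one hr0 hr1).mul_left _), tsum_mul_left,
          tsum_geometric_of_lt_one hr0 hr1]
        congr 1
        ring

theorem norm_sq_eq_sq_add_sum_removeNth (x : V3) (i : Fin 3) :
    ‖x‖ ^ 2 = x i ^ 2 + ∑ k, Fin.removeNth i x k ^ 2 := by
  rw [EuclideanSpace.norm_sq_eq, Fin.sum_univ_succAbove _ i]
  simp [Fin.removeNth]

theorem dist_removeNth_le (x y : V3) (i : Fin 3) :
    dist (Fin.removeNth i x) (Fin.removeNth i y) ≤ dist x y :=
  (dist_pi_le_iff dist_nonneg).2 fun _ => PiLp.dist_apply_le x y _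

def spherePatch (i : Fin 3) (b : Bool) : Set V3 :=
  {σ | ‖σ‖ = 1 ∧ 1 / 3 ≤ σ i ^ 2 ∧ (0 ≤ σ i ↔ b)}

theorem sphere_subset_iUnion_spherePatch :
    sphere (0 : V3) 1 ⊆ ⋃ p : Fin 3 × Bool, spherePatch p.1 p.2 := by
  intro σ hσ
  rw [mem_sphere_zero_iff_norm] at hσ
  obtain ⟨i, hi⟩ : ∃ i : Fin 3, 1 / 3 ≤ σ i ^ 2 := by
    by_contra! h
    have := norm_sq_eq_sq_add_sum_removeNth σ 0
    simp only [hσ, Fin.sum_univ_two, Fin.removeNth] at this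
    linarith [h 0, h (Fin.succAbove 0 0), h (Fin.succAbove 0 1)]
  exact mem_iUnion.2 ⟨(i, decide (0 ≤ σ i)), hσ, hi, by simp⟩

theorem dist_le_four_mul_dist_removeNth {i : Fin 3} {b : Bool} {σ τ : V3}
    (hσ : σ ∈ spherePatch i b) (hτ : τ ∈ spherePatch i b) :
    dist σ τ ≤ 4 * dist (Fin.removeNth i σ) (Fin.removeNth i τ) := by
  obtain ⟨hσ1, hσi, hσb⟩ := hσ
  obtain ⟨hτ1, hτi, hτb⟩ := hτ
  set d := dist (Fin.removeNth i σ) (Fin.removeNth i τ)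
  have hd : ∀ k, |Fin.removeNth i σ k - Fin.removeNth i τ k| ≤ d := fun k =>
    (Real.dist_eq _ _).symm.trans_le (dist_le_pi_dist _ _ k)
  have hσn := norm_sq_eq_sq_add_sum_removeNth σ i
  have hτn := norm_sq_eq_sq_add_sum_removeNth τ i
  have hστ := norm_sq_eq_sq_add_sum_removeNth (σ - τ) i
  simp only [Fin.sum_univ_two, hσ1, hτ1] at hσn hτn
  simp only [Fin.sum_univ_two, Fin.removeNth, PiLp.sub_apply] at hστ
  simp only [Fin.removeNth] at hd hσn hτn
  have hsign : 1 / 3 ≤ σ i * τ i := by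
    have h0 : 0 ≤ σ i * τ i := by
      cases b
      · simp only [Bool.false_eq_true, iff_false, not_le] at hσb hτb
        nlinarith
      · simp only [iff_true] at hσb hτb
        positivity
    nlinarith
  have hdiff : (σ i ^ 2 - τ i ^ 2) ^ 2 ≤ 16 * d ^ 2 := by
    have hterm : ∀ k, |τ (i.succAbove k) ^ 2 - σ (i.succAbove k) ^ 2| ≤ 2 * d := by
      intro k
      have hσk : |σ (i.succAbove k)| ≤ 1 := (PiLp.norm_apply_le σ _).trans hσ1.le
      have hτk : |τ (i.succAbove k)| ≤ 1 := (PiLp.norm_apply_le τ _).trans hτ1.le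
      rw [sq_sub_sq, abs_mul]
      gcongr
      · exact (abs_add_le _ _).trans (by linarith)
      · rw [abs_sub_comm]; exact hd k
    have habs : |σ i ^ 2 - τ i ^ 2| ≤ 4 * d := by
      have e : σ i ^ 2 - τ i ^ 2 = (τ (i.succAbove 0) ^ 2 - σ (i.succAbove 0) ^ 2)
          + (τ (i.succAbove 1) ^ 2 - σ (i.succAbove 1) ^ 2) := by linarith
      rw [e]
      exact (abs_add_le _ _).trans (by linarith [hterm 0, hterm 1])
    nlinarith [sq_abs (σ i ^ 2 - τ i ^ 2), abs_nonneg (σ i ^ 2 - τ i ^ 2)]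
  -- `(σᵢ - τᵢ)² (σᵢ + τᵢ)² = (σᵢ² - τᵢ²)²`, and `(σᵢ + τᵢ)² ≥ 4/3` by `hsign`.
  have hi : (σ i - τ i) ^ 2 ≤ 12 * d ^ 2 := by nlinarith
  refine (sq_le_sq₀ dist_nonneg (by positivity)).1 ?_
  rw [dist_eq_norm, hστ]
  nlinarith [hd 0, hd 1, abs_le.1 (hd 0), abs_le.1 (hd 1)]

theorem hausdorffMeasure_spherePatch_inter_closedBall_le (i : Fin 3) (b : Bool) (x : V3)
    {ρ : ℝ} (hρ : 0 ≤ ρ) :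
    μH[2] (spherePatch i b ∩ closedBall x ρ) ≤ ENNReal.ofReal (64 * ρ ^ 2) := by
  have hvol : (μH[2] : Measure (Fin 2 → ℝ)) = volume := by
    simpa using hausdorffMeasure_pi_real (ι := Fin 2)
  have himage : (fun σ : V3 => Fin.removeNth i σ) '' (spherePatch i b ∩ closedBall x ρ) ⊆
      closedBall (Fin.removeNth i x) ρ := by
    rintro _ ⟨σ, ⟨-, hσx⟩, rfl⟩
    exact (dist_removeNth_le σ x i).trans hσx
  calc μH[2] (spherePatch i b ∩ closedBall x ρ)
      ≤ ((4 : NNReal) : ℝ≥0∞) ^ (2 : ℝ) *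
          μH[2] ((fun σ : V3 => Fin.removeNth i σ) '' (spherePatch i b ∩ closedBall x ρ)) :=
        hausdorffMeasure_le_mul_image_of_dist_le_mul
          (fun σ hσ τ hτ => dist_le_four_mul_dist_removeNth hσ.1 hτ.1) zero_le_two
    _ ≤ 16 * volume (closedBall (Fin.removeNth i x) ρ) := by
        rw [← hvol]
        gcongr
        norm_num
    _ = ENNReal.ofReal (64 * ρ ^ 2) := by
        rw [Real.volume_pi_closedBall _ hρ, Fintype.card_fin, ← ENNReal.ofReal_ofNat,
          ← ENNReal.ofReal_mul (by norm_num)]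
        ring_nf

theorem hausdorffMeasure_sphere_inter_closedBall_le (x : V3) {ρ : ℝ} (hρ : 0 ≤ ρ) :
    μH[2] (sphere (0 : V3) 1 ∩ closedBall x ρ) ≤ ENNReal.ofReal (384 * ρ ^ 2) :=
  calc μH[2] (sphere (0 : V3) 1 ∩ closedBall x ρ)
      ≤ μH[2] (⋃ p : Fin 3 × Bool, spherePatch p.1 p.2 ∩ closedBall x ρ) := by
        rw [← iUnion_inter]
        exact measure_mono (inter_subset_inter_left _ sphere_subset_iUnion_spherePatch)
    _ ≤ ∑ p : Fin 3 × Bool, μH[2] (spherePatch p.1 p.2 ∩ closedBall x ρ) :=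
        measure_iUnion_fintype_le _ _
    _ ≤ ∑ _p : Fin 3 × Bool, ENNReal.ofReal (64 * ρ ^ 2) :=
        Finset.sum_le_sum fun p _ => hausdorffMeasure_spherePatch_inter_closedBall_le p.1 p.2 x hρ
    _ = ENNReal.ofReal (384 * ρ ^ 2) := by
        rw [Finset.sum_const, Finset.card_univ, nsmul_eq_mul, ← ENNReal.ofReal_natCast,
          ← ENNReal.ofReal_mul (by positivity)]
        simp only [Fintype.card_prod, Fintype.card_fin, Fintype.card_bool]
        ring_nf

theorem norm_sub_norm_smul_sq {E : Type*} [NormedAddCommGroup E] [InnerProductSpace ℝ E]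
    (x : E) {σ : E} (hσ : ‖σ‖ = 1) :
    ‖x - ‖x‖ • σ‖ ^ 2 = 2 * ‖x‖ ^ 2 * (1 - ⟪‖x‖⁻¹ • x, σ⟫_ℝ) := by
  rcases eq_or_ne x 0 with rfl | hx
  · simp
  rw [norm_sub_sq_real, norm_smul, hσ, real_inner_smul_left, real_inner_smul_right,
    Real.norm_eq_abs, abs_norm]
  field_simp
  ring

theorem sphereMeasure_one_sub_inner_preimage_Ioc_le {n : V3} (hn : ‖n‖ = 1) {h : ℝ}
    (hh : 0 ≤ h) :
    sphereMeasure ((fun σ => 1 - ⟪n, σ⟫_ℝ) ⁻¹' Ioc 0 h) ≤ ENNReal.ofReal (768 * h) := by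
  have hcap : (fun σ => 1 - ⟪n, σ⟫_ℝ) ⁻¹' Ioc 0 h ∩ sphere 0 1 ⊆
      sphere 0 1 ∩ closedBall n (√(2 * h)) := by
    rintro σ ⟨⟨-, hσh⟩, hσ⟩
    refine ⟨hσ, Real.le_sqrt_of_sq_le ?_⟩
    rw [mem_sphere_zero_iff_norm] at hσ
    rw [dist_eq_norm, norm_sub_sq_real, hσ, hn, real_inner_comm]
    simp only at hσh
    linarith
  rw [sphereMeasure, Measure.restrict_apply' isClosed_sphere.measurableSet]
  calc μH[2] ((fun σ => 1 - ⟪n, σ⟫_ℝ) ⁻¹' Ioc 0 h ∩ sphere 0 1)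
      ≤ ENNReal.ofReal (384 * √(2 * h) ^ 2) :=
        (measure_mono hcap).trans (hausdorffMeasure_sphere_inter_closedBall_le n (by positivity))
    _ = ENNReal.ofReal (768 * h) := by
        rw [Real.sq_sqrt (by positivity)]
        ring_nf

theorem mul_one_sub_le_rpow_of_angular_bound {b : ℝ → ℝ} {ν K : ℝ} (hν : 0 ≤ ν) (hK : 0 ≤ K)
    (hb_upper : ∀ θ ∈ Ioc (0 : ℝ) (Real.pi / 2), b (Real.cos θ) ≤ K * θ ^ (-2 - ν))
    {t : ℝ} (ht0 : 0 ≤ t) (ht1 : t < 1) :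
    b t * (1 - t) ≤ K * (1 - t) ^ (-(ν / 2)) := by
  set θ := Real.arccos t
  have hθ : 0 < θ := Real.arccos_pos.2 ht1
  have hcos : Real.cos θ = t := Real.cos_arccos (by linarith) ht1.le
  have hb := hb_upper θ ⟨hθ, Real.arccos_le_pi_div_two.2 ht0⟩
  rw [hcos] at hb
  have hθsq : 1 - t ≤ θ ^ 2 := by
    nlinarith [Real.one_sub_sq_div_two_le_cos (x := θ)]
  calc b t * (1 - t) ≤ K * θ ^ (-2 - ν) * θ ^ 2 :=
        mul_le_mul hb hθsq (by linarith) (by positivity)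
    _ = K * (θ ^ 2) ^ (-(ν / 2)) := by
        rw [mul_assoc, ← Real.rpow_natCast θ 2, ← Real.rpow_add hθ, ← Real.rpow_mul hθ.le]
        congr 2
        push_cast
        ring
    _ ≤ K * (1 - t) ^ (-(ν / 2)) :=
        mul_le_mul_of_nonneg_left
          (Real.rpow_le_rpow_of_nonpos (by linarith) hθsq (by linarith)) hK

theorem ofReal_mul_indicator_le_indicator_rpow {b : ℝ → ℝ} {ν K r s d t : ℝ} (hν : 0 ≤ ν)
    (hK : 0 ≤ K) (hb_zero : ∀ t < (0 : ℝ), b t = 0)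
    (hb_upper : ∀ θ ∈ Ioc (0 : ℝ) (Real.pi / 2), b (Real.cos θ) ≤ K * θ ^ (-2 - ν))
    (hs : 1 ≤ s) (ht : t ≤ 1) (hd0 : 0 ≤ d) (hd : d ^ 2 = 2 * r ^ 2 * (1 - t)) :
    ENNReal.ofReal (b t * (1 - t) * if d ≤ s then 1 else 0) ≤
      (Ioc 0 (2 * min 1 (s ^ 2 / (1 + r ^ 2)))).indicator
        (fun u => ENNReal.ofReal K * ENNReal.ofReal (u ^ (-(ν / 2)))) (1 - t) := by
  by_cases hds : d ≤ s
  swap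
  · simp [hds]
  rcases lt_or_ge t 0 with ht0 | ht0
  · simp [hb_zero t ht0]
  rcases ht.eq_or_lt with rfl | ht1
  · simp
  have hmem : 1 - t ∈ Ioc 0 (2 * min 1 (s ^ 2 / (1 + r ^ 2))) := by
    refine ⟨by linarith, ?_⟩
    rw [mul_min_of_nonneg _ _ zero_le_two, le_min_iff]
    constructor
    · linarith
    · rw [mul_div_assoc', le_div_iff₀ (by positivity)]
      nlinarith [pow_le_pow_left₀ hd0 hds 2, sq_nonneg r]
  rw [indicator_of_mem hmem, if_pos hds, mul_one, ← ENNReal.ofReal_mul hK]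
  exact ENNReal.ofReal_le_ofReal (mul_one_sub_le_rpow_of_angular_bound hν hK hb_upper ht0 ht1)

theorem lintegral_sphereMeasure_le_setLIntegral_rpow {b : ℝ → ℝ} {ν K : ℝ} (hν : 0 ≤ ν)
    (hK : 0 ≤ K) (hb_zero : ∀ t < (0 : ℝ), b t = 0)
    (hb_upper : ∀ θ ∈ Ioc (0 : ℝ) (Real.pi / 2), b (Real.cos θ) ≤ K * θ ^ (-2 - ν))
    (ξ : V3) {s : ℝ} (hs : 1 ≤ s) :
    let u : V3 → ℝ := fun σ => 1 - ⟪‖ξ‖⁻¹ • ξ, σ⟫_ℝ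
    (∫⁻ σ, ENNReal.ofReal (b ⟪‖ξ‖⁻¹ • ξ, σ⟫_ℝ * (1 - ⟪‖ξ‖⁻¹ • ξ, σ⟫_ℝ) *
        (if ‖ξ - ‖ξ‖ • σ‖ ≤ s then 1 else 0)) ∂sphereMeasure) ≤
      ENNReal.ofReal K * ∫⁻ σ in u ⁻¹' Ioc 0 (2 * min 1 ((s / jap ξ) ^ 2)),
        ENNReal.ofReal (u σ ^ (-(ν / 2))) ∂sphereMeasure := by
  intro u
  have hjap : (s / jap ξ) ^ 2 = s ^ 2 / (1 + ‖ξ‖ ^ 2) := by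
    rw [div_pow, show jap ξ ^ 2 = 1 + ‖ξ‖ ^ 2 from Real.sq_sqrt (by positivity)]
  have hu : Measurable u := by fun_prop
  rw [← lintegral_const_mul' _ _ ENNReal.ofReal_ne_top,
    ← lintegral_indicator (hu measurableSet_Ioc)]
  refine lintegral_mono_ae ?_
  filter_upwards [ae_restrict_mem isClosed_sphere.measurableSet] with σ hσ
  rw [mem_sphere_zero_iff_norm] at hσ
  have ht : ⟪‖ξ‖⁻¹ • ξ, σ⟫_ℝ ≤ 1 := (real_inner_le_norm _ σ).trans <| by
    rw [hσ, mul_one, norm_smul, norm_inv, norm_norm]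
    exact inv_mul_le_one_of_le₀ le_rfl (norm_nonneg _)
  rw [hjap]
  exact ofReal_mul_indicator_le_indicator_rpow hν hK hb_zero hb_upper hs ht (norm_nonneg _)
    (norm_sub_norm_smul_sq ξ hσ)

theorem one_le_jap (v : V3) : 1 ≤ jap v :=
  Real.one_le_sqrt.2 (le_add_of_nonneg_right (sq_nonneg _))

theorem two_mul_min_one_sq_rpow {y a : ℝ} (hy : 0 ≤ y) (ha : 0 ≤ a) :
    (2 * min 1 (y ^ 2)) ^ a = 2 ^ a * min 1 (y ^ (2 * a)) := by
  rw [Real.mul_rpow zero_le_two (by positivity), Real.rpow_mul hy, Real.rpow_two]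
  congr 1
  rcases le_total (y ^ 2) 1 with h | h
  · rw [min_eq_right h, min_eq_right (Real.rpow_le_one (by positivity) h ha)]
  · rw [min_eq_left h, Real.one_rpow, min_eq_left (Real.one_le_rpow h ha)]

theorem sphere_integral_small_deviation_bound_general
    (ν K : ℝ) (b : ℝ → ℝ)
    (hν : 0 < ν) (hν2 : ν < 2) (hK : 0 < K)
    (hb_zero : ∀ t < (0 : ℝ), b t = 0)
    (hb_upper : ∀ θ ∈ Set.Ioc (0 : ℝ) (Real.pi / 2),
      b (Real.cos θ) ≤ K * θ ^ (-2 - ν)) :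
    ∃ C : ℝ, 0 < C ∧ ∀ ξ ξs : V3, ξ ≠ 0 →
      (∫⁻ σ : V3,
          ENNReal.ofReal (b ⟪‖ξ‖⁻¹ • ξ, σ⟫_ℝ * (1 - ⟪‖ξ‖⁻¹ • ξ, σ⟫_ℝ) *
            (if ‖ξ - ‖ξ‖ • σ‖ ≤ jap ξs then 1 else 0)) ∂sphereMeasure)
        ≤ ENNReal.ofReal (C * min 1 ((jap ξs / jap ξ) ^ (2 - ν))) := by
  have hr : (2 : ℝ) ^ (ν / 2 - 1) < 1 :=
    Real.rpow_lt_one_of_one_lt_of_neg one_lt_two (by linarith)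
  refine ⟨K * (768 * 2 ^ (ν / 2) / (1 - 2 ^ (ν / 2 - 1))) * 2 ^ (1 - ν / 2),
    by have := sub_pos.2 hr; positivity, fun ξ ξs hξ => ?_⟩
  have hy : 0 < jap ξs / jap ξ :=
    div_pos (one_pos.trans_le (one_le_jap ξs)) (one_pos.trans_le (one_le_jap ξ))
  have hT : 0 < 2 * min 1 ((jap ξs / jap ξ) ^ 2) := mul_pos two_pos (lt_min one_pos (by positivity))
  calc _ ≤ _ := lintegral_sphereMeasure_le_setLIntegral_rpow hν.le hK.le hb_zero hb_upper ξ
        (one_le_jap ξs)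
    _ ≤ ENNReal.ofReal K * ENNReal.ofReal (768 * 2 ^ (ν / 2) / (1 - 2 ^ (ν / 2 - 1)) *
          (2 * min 1 ((jap ξs / jap ξ) ^ 2)) ^ (1 - ν / 2)) := by
        gcongr
        exact setLIntegral_rpow_neg_le_of_measure_le _ (by positivity) (by linarith) (by norm_num)
          hT fun h hh _ => sphereMeasure_one_sub_inner_preimage_Ioc_le (norm_smul_inv_norm hξ) hh.le
    _ = _ := by
        rw [← ENNReal.ofReal_mul hK.le, two_mul_min_one_sq_rpow hy.le (by linarith),
          show 2 * (1 - ν / 2) = 2 - ν by ring]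
        ring_nf

/-- spherical integral bound with the small-deviation cutoff
(kernel estimate `later-use1`/`later-use2`). -/
theorem sphere_integral_small_deviation_bound
    (ν K : ℝ) (b : ℝ → ℝ)
    (hν : 0 < ν) (hν2 : ν < 2) (hK : 0 < K)
    (hb_meas : Measurable b) (hb_nonneg : ∀ t, 0 ≤ b t)
    (hb_zero : ∀ t < (0 : ℝ), b t = 0)
    (hb_upper : ∀ θ ∈ Set.Ioc (0 : ℝ) (Real.pi / 2),
      b (Real.cos θ) ≤ K * θ ^ (-2 - ν)) :
    ∃ C : ℝ, 0 < C ∧ ∀ ξ ξs : V3, ξ ≠ 0 →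
      (∫⁻ σ : V3,
          ENNReal.ofReal (b ⟪‖ξ‖⁻¹ • ξ, σ⟫_ℝ * (1 - ⟪‖ξ‖⁻¹ • ξ, σ⟫_ℝ) *
            (if ‖ξ - ‖ξ‖ • σ‖ ≤ jap ξs then 1 else 0)) ∂sphereMeasure)
        ≤ ENNReal.ofReal (C * min 1 ((jap ξs / jap ξ) ^ (2 - ν))) :=
  sphere_integral_small_deviation_bound_general ν K b hν hν2 hK hb_zero hb_upper
end
end

section
/- For every β ∈ ℝ there exists a constant C > 0 such that for all v, v_* ∈ ℝ³ with v ≠ v_* and all σ ∈ 𝕊² with ((v-v_*)/|v-v_*|)·σ ≥ 0, writing v' = (v+v_*)/2 + (|v-v_*|/2)σ and cos θ = ((v-v_*)/|v-v_*|)·σ with θ ∈ [0,π/2], one has |⟨v⟩^β − ⟨v'⟩^β| ≤ C sin(θ/2) ( ⟨v⟩^β ⟨v_*⟩^{2|β|+1} 𝟙_{|v-v_*| > 1} + ⟨v⟩^{β-1} |v-v_*| 𝟙_{|v-v_*| ≤ 1} ). -/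
open MeasureTheory Filter
open scoped Topology ENNReal InnerProductSpace FourierTransform

noncomputable section

namespace BWaux

lemma abs_le_of_sq_le_sq'' {x y : ℝ} (h : x ^ 2 ≤ y ^ 2) : |x| ≤ |y| := by
  rw [← Real.sqrt_sq_eq_abs, ← Real.sqrt_sq_eq_abs]
  exact Real.sqrt_le_sqrt h

lemma sqrt_one_add_sq_lip {x y : ℝ} (hx : 0 ≤ x) (hy : 0 ≤ y) :
    |Real.sqrt (1 + x ^ 2) - Real.sqrt (1 + y ^ 2)| ≤ |x - y| := by
  set sx := Real.sqrt (1 + x ^ 2) with hsx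
  set sy := Real.sqrt (1 + y ^ 2) with hsy
  have hx2 : sx ^ 2 = 1 + x ^ 2 := Real.sq_sqrt (by positivity)
  have hy2 : sy ^ 2 = 1 + y ^ 2 := Real.sq_sqrt (by positivity)
  have hprod : 1 + x * y ≤ sx * sy := by
    have h1 : (1 + x * y) ^ 2 ≤ (1 + x ^ 2) * (1 + y ^ 2) := by nlinarith [sq_nonneg (x - y)]
    have h2 : sx * sy = Real.sqrt ((1 + x ^ 2) * (1 + y ^ 2)) :=
      (Real.sqrt_mul (by positivity) _).symm
    rw [h2]
    calc 1 + x * y = Real.sqrt ((1 + x * y) ^ 2) := (Real.sqrt_sq (by positivity)).symm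
      _ ≤ _ := Real.sqrt_le_sqrt h1
  have h3 : (sx - sy) ^ 2 ≤ (x - y) ^ 2 := by nlinarith
  exact abs_le_of_sq_le_sq'' h3

lemma rpow_deriv_bound {β m M : ℝ} {a b : ℝ} (hm : 0 < m) (hma : m ≤ a) (hmb : m ≤ b)
    (haM : a ≤ M) (hbM : b ≤ M) :
    |a ^ β - b ^ β| ≤ |β| * max (m ^ (β - 1)) (M ^ (β - 1)) * |a - b| := by
  wlog hab : a ≤ b generalizing a b
  · have h := this hmb hma hbM haM (le_of_not_ge hab)
    rwa [abs_sub_comm (b ^ β), abs_sub_comm b a] at h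
  rcases eq_or_lt_of_le hab with rfl | hlt
  · simp
  have ha0 : 0 < a := hm.trans_le hma
  have hcont : ContinuousOn (fun x : ℝ => x ^ β) (Set.Icc a b) := fun x hx =>
    (Real.continuousAt_rpow_const x β (Or.inl (ha0.trans_le hx.1).ne')).continuousWithinAt
  have hdiff : DifferentiableOn ℝ (fun x : ℝ => x ^ β) (Set.Ioo a b) := fun x hx =>
    (Real.hasDerivAt_rpow_const (p := β)
      (Or.inl (ha0.trans hx.1).ne')).differentiableAt.differentiableWithinAt
  obtain ⟨ξ, hξ, hd⟩ := exists_deriv_eq_slope (fun x : ℝ => x ^ β) hlt hcont hdiff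
  have hξ0 : 0 < ξ := ha0.trans hξ.1
  have hde : deriv (fun x : ℝ => x ^ β) ξ = β * ξ ^ (β - 1) :=
    (Real.hasDerivAt_rpow_const (p := β) (Or.inl hξ0.ne')).deriv
  rw [hde] at hd
  have hba : b - a ≠ 0 := sub_ne_zero.mpr hlt.ne'
  have heq : b ^ β - a ^ β = β * ξ ^ (β - 1) * (b - a) := by
    field_simp at hd
    linarith
  have hpos : 0 < ξ ^ (β - 1) := Real.rpow_pos_of_pos hξ0 _
  have hbound : ξ ^ (β - 1) ≤ max (m ^ (β - 1)) (M ^ (β - 1)) := by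
    rcases le_total 1 β with hβ | hβ
    · exact le_max_of_le_right (Real.rpow_le_rpow hξ0.le (hξ.2.le.trans hbM) (by linarith))
    · exact le_max_of_le_left (Real.rpow_le_rpow_of_nonpos hm (hma.trans hξ.1.le) (by linarith))
  calc |a ^ β - b ^ β| = |β| * ξ ^ (β - 1) * |b - a| := by
        rw [abs_sub_comm, heq, abs_mul, abs_mul, abs_of_pos hpos]
    _ ≤ |β| * max (m ^ (β - 1)) (M ^ (β - 1)) * |a - b| := by
        rw [abs_sub_comm b a]
        gcongr

lemma le_C_aux (q : ℝ) (hq : 0 ≤ q) {A x : ℝ} (hA0 : 0 ≤ A) (hA : A ≤ 2500) (hx0 : 0 ≤ x)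
    (hx : x ≤ 50) : A * x ^ q ≤ (50 : ℝ) ^ (q + 2) := by
  have h1 : x ^ q ≤ (50 : ℝ) ^ q := Real.rpow_le_rpow hx0 hx hq
  have h2 : (50 : ℝ) ^ (q + 2) = 50 ^ q * 2500 := by
    rw [Real.rpow_add (by norm_num), show ((2 : ℝ)) = ((2 : ℕ) : ℝ) by norm_num,
      Real.rpow_natCast]
    norm_num
  have h3 : (0 : ℝ) < 50 ^ q := Real.rpow_pos_of_pos (by norm_num) q
  have h4 : 0 ≤ x ^ q := Real.rpow_nonneg hx0 q
  nlinarith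

set_option maxHeartbeats 800000 in
lemma core (β a b c r s : ℝ) (ha : 1 ≤ a) (hb : 1 ≤ b) (hc : 1 ≤ c)
    (hr : 0 < r) (hs0 : 0 ≤ s) (hs1 : s ≤ 1)
    (hab : |a - b| ≤ r * s)
    (hbM : b ≤ 3 * (a * c))
    (hmb : r / Real.sqrt 2 - c ≤ b) (hma : r - c ≤ a)
    (hrac : r ≤ 2 * (a * c)) (harc : a ≤ 1 + r + c) :
    |a ^ β - b ^ β| ≤ ((|β| + 1) * (50 : ℝ) ^ (|β| + 2)) * s *
      (a ^ β * c ^ (2 * |β| + 1) * (if 1 < r then 1 else 0)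
        + a ^ (β - 1) * r * (if r ≤ 1 then 1 else 0)) := by
  have ha0 : (0 : ℝ) < a := by linarith
  have hb0 : (0 : ℝ) < b := by linarith
  have hc0 : (0 : ℝ) < c := by linarith
  have hq0 : (0 : ℝ) ≤ |β| := abs_nonneg β
  have hβq : β ≤ |β| := le_abs_self β
  have hβq' : -β ≤ |β| := neg_le_abs β
  have hC50 : (0 : ℝ) < (50 : ℝ) ^ (|β| + 2) := Real.rpow_pos_of_pos (by norm_num) _
  have hapow : (0 : ℝ) < a ^ β := Real.rpow_pos_of_pos ha0 β
  have hapow1 : (0 : ℝ) < a ^ (β - 1) := Real.rpow_pos_of_pos ha0 _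
  have hcpow : (0 : ℝ) < c ^ (2 * |β| + 1) := Real.rpow_pos_of_pos hc0 _
  have hu2 : (Real.sqrt 2) ^ 2 = 2 := Real.sq_sqrt (by norm_num)
  have hu0 : (0:ℝ) < Real.sqrt 2 := Real.sqrt_pos.mpr (by norm_num)
  have hu1 : (1:ℝ) ≤ Real.sqrt 2 := by nlinarith
  have hu32 : Real.sqrt 2 ≤ 3 / 2 := by nlinarith
  by_cases h1 : 1 < r
  · -- large relative velocity
    simp only [if_pos h1, if_neg (not_le.mpr h1), mul_one, mul_zero, add_zero]
    have hac1 : (1 : ℝ) ≤ a * c := by nlinarith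
    have ha3 : a ≤ 3 * (a * c) := by nlinarith
    have hM3 : max a b ≤ 3 * (a * c) := max_le ha3 hbM
    have hminpos : (0 : ℝ) < min a b := lt_min ha0 hb0
    have hmin1 : (1 : ℝ) ≤ min a b := le_min ha hb
    have key := rpow_deriv_bound (β := β) hminpos (min_le_left a b) (min_le_right a b)
      (le_max_left a b) (le_max_right a b)
    rcases le_or_gt 1 β with hβ1 | hβ1
    · -- β ≥ 1
      have hqβ : |β| = β := abs_of_nonneg (by linarith)
      have hmm : max ((min a b) ^ (β - 1)) ((max a b) ^ (β - 1)) ≤ (3 * (a * c)) ^ (β - 1) :=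
        max_le (Real.rpow_le_rpow hminpos.le ((min_le_left a b).trans ha3) (by linarith))
          (Real.rpow_le_rpow (by positivity) hM3 (by linarith))
      have step1 : |a ^ β - b ^ β| ≤ β * ((3 * (a * c)) ^ (β - 1) * (r * s)) := by
        calc |a ^ β - b ^ β| ≤ |β| * max ((min a b) ^ (β - 1)) ((max a b) ^ (β - 1)) * |a - b| :=
              key
          _ ≤ |β| * ((3 * (a * c)) ^ (β - 1)) * (r * s) :=
              mul_le_mul (mul_le_mul_of_nonneg_left hmm hq0) hab (abs_nonneg _) (by positivity)
          _ = β * ((3 * (a * c)) ^ (β - 1) * (r * s)) := by rw [hqβ]; ring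
      have halg : (3 * (a * c)) ^ (β - 1) = 3 ^ (β - 1) * (a ^ (β - 1) * c ^ (β - 1)) := by
        rw [Real.mul_rpow (by norm_num) (by positivity), Real.mul_rpow ha0.le hc0.le]
      have hstep2 : (3 * (a * c)) ^ (β - 1) * (r * s) ≤
          3 ^ (β - 1) * (a ^ (β - 1) * c ^ (β - 1)) * (2 * (a * c)) * s := by
        rw [halg]
        have hK : (0:ℝ) ≤ 3 ^ (β - 1) * (a ^ (β - 1) * c ^ (β - 1)) := by positivity
        have hrs : r * s ≤ (2 * (a * c)) * s := mul_le_mul_of_nonneg_right hrac hs0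
        calc 3 ^ (β - 1) * (a ^ (β - 1) * c ^ (β - 1)) * (r * s)
            ≤ 3 ^ (β - 1) * (a ^ (β - 1) * c ^ (β - 1)) * ((2 * (a * c)) * s) :=
              mul_le_mul_of_nonneg_left hrs hK
          _ = 3 ^ (β - 1) * (a ^ (β - 1) * c ^ (β - 1)) * (2 * (a * c)) * s := by ring
      have hpow_a : a ^ (β - 1) * a = a ^ β := by
        rw [← Real.rpow_add_one ha0.ne']; ring_nf
      have hpow_c : c ^ (β - 1) * c = c ^ β := by
        rw [← Real.rpow_add_one hc0.ne']; ring_nf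
      have hcβ : c ^ β ≤ c ^ (2 * |β| + 1) :=
        Real.rpow_le_rpow_of_exponent_le hc (by linarith)
      have hcoef : β * (2 * 3 ^ (β - 1)) ≤ (|β| + 1) * (50 : ℝ) ^ (|β| + 2) := by
        have h3 : (3:ℝ) ^ (β - 1) ≤ 3 ^ (|β|) := Real.rpow_le_rpow_of_exponent_le
          (by norm_num) (by linarith)
        have h2 : 2 * (3:ℝ) ^ (|β|) ≤ (50 : ℝ) ^ (|β| + 2) :=
          le_C_aux _ hq0 (by norm_num) (by norm_num) (by norm_num) (by norm_num)
        have h3p : (0:ℝ) < (3:ℝ) ^ (β - 1) := Real.rpow_pos_of_pos (by norm_num) _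
        have s1 : β * (2 * 3 ^ (β - 1)) ≤ |β| * (2 * 3 ^ (β - 1)) :=
          mul_le_mul_of_nonneg_right hβq (by positivity)
        have s2 : 2 * (3:ℝ) ^ (β - 1) ≤ (50 : ℝ) ^ (|β| + 2) :=
          le_trans (mul_le_mul_of_nonneg_left h3 (by norm_num)) h2
        exact s1.trans (mul_le_mul (by linarith) s2 (by positivity) (by linarith))
      calc |a ^ β - b ^ β| ≤ β * ((3 * (a * c)) ^ (β - 1) * (r * s)) := step1
        _ ≤ β * (3 ^ (β - 1) * (a ^ (β - 1) * c ^ (β - 1)) * (2 * (a * c)) * s) := by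
            apply mul_le_mul_of_nonneg_left hstep2 (by linarith)
        _ = (β * (2 * 3 ^ (β - 1))) * s * (a ^ β * c ^ β) := by
            rw [← hpow_a, ← hpow_c]; ring
        _ ≤ ((|β| + 1) * (50 : ℝ) ^ (|β| + 2)) * s * (a ^ β * c ^ (2 * |β| + 1)) := by
            apply mul_le_mul
            · exact mul_le_mul_of_nonneg_right hcoef hs0
            · exact mul_le_mul_of_nonneg_left hcβ hapow.le
            · positivity
            · positivity
    · -- β < 1
      have hmm : max ((min a b) ^ (β - 1)) ((max a b) ^ (β - 1)) = (min a b) ^ (β - 1) := by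
        apply max_eq_left
        exact Real.rpow_le_rpow_of_nonpos hminpos (min_le_max) (by linarith)
      rw [hmm] at key
      by_cases h2 : r ≤ 2 * Real.sqrt 2 * c
      · -- moderate r
        have hmle1 : (min a b) ^ (β - 1) ≤ 1 :=
          Real.rpow_le_one_of_one_le_of_nonpos hmin1 (by linarith)
        have step1 : |a ^ β - b ^ β| ≤ (3 * |β|) * (c * s) := by
          calc |a ^ β - b ^ β| ≤ |β| * (min a b) ^ (β - 1) * |a - b| := key
            _ ≤ (|β| * 1) * (r * s) :=
                mul_le_mul (mul_le_mul_of_nonneg_left hmle1 hq0) hab (abs_nonneg _)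
                  (by positivity)
            _ = |β| * (r * s) := by ring
            _ ≤ |β| * ((3 * c) * s) := by
                apply mul_le_mul_of_nonneg_left _ hq0
                apply mul_le_mul_of_nonneg_right _ hs0
                nlinarith
            _ = (3 * |β|) * (c * s) := by ring
        rcases le_or_gt 0 β with hβ0 | hβ0
        · -- 0 ≤ β < 1
          have h1a : (1 : ℝ) ≤ a ^ β := Real.one_le_rpow ha hβ0
          have hcc : c ≤ a ^ β * c ^ (2 * |β| + 1) := by
            have h2' : c ^ (1:ℝ) ≤ c ^ (2 * |β| + 1) :=
              Real.rpow_le_rpow_of_exponent_le hc (by linarith)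
            rw [Real.rpow_one] at h2'
            have h3' := mul_le_mul_of_nonneg_right h1a hcpow.le
            rw [one_mul] at h3'
            linarith
          have hcoef : 3 * |β| ≤ (|β| + 1) * (50 : ℝ) ^ (|β| + 2) := by
            have h3 := le_C_aux |β| hq0 (A := 3) (x := 1) (by norm_num) (by norm_num)
              (by norm_num) (by norm_num)
            rw [Real.one_rpow, mul_one] at h3
            nlinarith
          calc |a ^ β - b ^ β| ≤ (3 * |β|) * (c * s) := step1
            _ ≤ ((|β| + 1) * (50 : ℝ) ^ (|β| + 2)) * (c * s) :=
                mul_le_mul_of_nonneg_right hcoef (by positivity)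
            _ ≤ ((|β| + 1) * (50 : ℝ) ^ (|β| + 2)) * ((a ^ β * c ^ (2 * |β| + 1)) * s) := by
                apply mul_le_mul_of_nonneg_left _ (by positivity)
                exact mul_le_mul_of_nonneg_right hcc hs0
            _ = ((|β| + 1) * (50 : ℝ) ^ (|β| + 2)) * s * (a ^ β * c ^ (2 * |β| + 1)) := by ring
        · -- β < 0
          have habs : |β| = -β := abs_of_neg hβ0
          have h5c : a ≤ 5 * c := by nlinarith
          have h5cpow : (5 * c) ^ β ≤ a ^ β :=
            Real.rpow_le_rpow_of_nonpos ha0 h5c hβ0.le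
          have h5eq : ((5 * c : ℝ)) ^ β = 5 ^ β * c ^ β := Real.mul_rpow (by norm_num) hc0.le
          have h5βpos : (0:ℝ) < (5:ℝ) ^ β := Real.rpow_pos_of_pos (by norm_num) β
          have h5qpos : (0:ℝ) < (5:ℝ) ^ (|β|) := Real.rpow_pos_of_pos (by norm_num) _
          have h5inv : (5:ℝ) ^ (|β|) * (5:ℝ) ^ β = 1 := by
            rw [← Real.rpow_add (by norm_num), habs]
            norm_num
          have hkey : 5 ^ β * c ≤ a ^ β * c ^ (2 * |β| + 1) := by
            have hc1 : c ^ (1 : ℝ) ≤ c ^ (β + (2 * |β| + 1)) :=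
              Real.rpow_le_rpow_of_exponent_le hc (by nlinarith [hβq'])
            have hce : c ^ (β + (2 * |β| + 1)) = c ^ β * c ^ (2 * |β| + 1) :=
              Real.rpow_add hc0 _ _
            calc (5:ℝ) ^ β * c = 5 ^ β * c ^ (1:ℝ) := by rw [Real.rpow_one]
              _ ≤ 5 ^ β * (c ^ β * c ^ (2 * |β| + 1)) := by
                  rw [← hce]; exact mul_le_mul_of_nonneg_left hc1 h5βpos.le
              _ = (5 * c) ^ β * c ^ (2 * |β| + 1) := by rw [h5eq]; ring
              _ ≤ a ^ β * c ^ (2 * |β| + 1) := mul_le_mul_of_nonneg_right h5cpow hcpow.le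
          have hc_le : c ≤ 5 ^ (|β|) * (a ^ β * c ^ (2 * |β| + 1)) := by
            have := mul_le_mul_of_nonneg_left hkey h5qpos.le
            rw [← mul_assoc, h5inv, one_mul] at this
            exact this
          have hcoef : (3 * |β|) * 5 ^ (|β|) ≤ (|β| + 1) * (50 : ℝ) ^ (|β| + 2) := by
            have h3 := le_C_aux |β| hq0 (A := 3) (x := 5) (by norm_num) (by norm_num)
              (by norm_num) (by norm_num)
            calc (3 * |β|) * 5 ^ (|β|) = |β| * (3 * 5 ^ (|β|)) := by ring
              _ ≤ (|β| + 1) * (50 : ℝ) ^ (|β| + 2) :=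
                  mul_le_mul (by linarith) h3 (by positivity) (by linarith)
          calc |a ^ β - b ^ β| ≤ (3 * |β|) * (c * s) := step1
            _ ≤ (3 * |β|) * ((5 ^ (|β|) * (a ^ β * c ^ (2 * |β| + 1))) * s) := by
                apply mul_le_mul_of_nonneg_left _ (by positivity)
                exact mul_le_mul_of_nonneg_right hc_le hs0
            _ = ((3 * |β|) * 5 ^ (|β|)) * s * (a ^ β * c ^ (2 * |β| + 1)) := by ring
            _ ≤ ((|β| + 1) * (50 : ℝ) ^ (|β| + 2)) * s * (a ^ β * c ^ (2 * |β| + 1)) := by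
                apply mul_le_mul_of_nonneg_right _ (by positivity)
                exact mul_le_mul_of_nonneg_right hcoef hs0
      · -- r large compared to c
        push_neg at h2
        have h2u0 : (0:ℝ) < 2 * Real.sqrt 2 := by positivity
        have hc_lt : c < r / (2 * Real.sqrt 2) := by
          rw [lt_div_iff₀ h2u0]; nlinarith
        have hdivhalf : r / (2 * Real.sqrt 2) + r / (2 * Real.sqrt 2) = r / Real.sqrt 2 := by
          field_simp; ring
        have hdivle : r / Real.sqrt 2 ≤ r := div_le_self hr.le hu1
        have hm_lb : r / (2 * Real.sqrt 2) ≤ min a b := by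
          apply le_min
          · linarith
          · linarith
        have hm_pos2 : (0:ℝ) < r / (2 * Real.sqrt 2) := by positivity
        have hmpow : (min a b) ^ (β - 1) ≤ (r / (2 * Real.sqrt 2)) ^ (β - 1) :=
          Real.rpow_le_rpow_of_nonpos hm_pos2 hm_lb (by linarith)
        have hsplit : (r / (2 * Real.sqrt 2)) ^ (β - 1) * r =
            (2 * Real.sqrt 2) ^ (1 - β) * r ^ β := by
          rw [Real.div_rpow hr.le h2u0.le, show (1:ℝ) - β = -(β - 1) by ring,
            Real.rpow_neg h2u0.le]
          rw [div_mul_eq_mul_div, ← Real.rpow_add_one hr.ne']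
          rw [show β - 1 + 1 = β by ring]
          ring
        have step1 : |a ^ β - b ^ β| ≤ |β| * ((2 * Real.sqrt 2) ^ (1 - β) * r ^ β) * s := by
          calc |a ^ β - b ^ β| ≤ |β| * (min a b) ^ (β - 1) * |a - b| := key
            _ ≤ |β| * (r / (2 * Real.sqrt 2)) ^ (β - 1) * (r * s) :=
                mul_le_mul (mul_le_mul_of_nonneg_left hmpow hq0) hab (abs_nonneg _)
                  (by positivity)
            _ = ((r / (2 * Real.sqrt 2)) ^ (β - 1) * r) * s * |β| := by ring
            _ = |β| * ((2 * Real.sqrt 2) ^ (1 - β) * r ^ β) * s := by rw [hsplit]; ring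
        have h2u3 : 2 * Real.sqrt 2 ≤ 3 := by linarith
        have h2upow : (2 * Real.sqrt 2) ^ (1 - β) ≤ (3:ℝ) ^ (1 - β) :=
          Real.rpow_le_rpow h2u0.le h2u3 (by linarith)
        have h3pow : (3:ℝ) ^ (1 - β) ≤ (3:ℝ) ^ (1 + |β|) :=
          Real.rpow_le_rpow_of_exponent_le (by norm_num) (by linarith)
        have h3split : (3:ℝ) ^ (1 + |β|) = 3 * 3 ^ (|β|) := by
          rw [Real.rpow_add (by norm_num) , Real.rpow_one]
        have h2uβpos : (0:ℝ) < (2 * Real.sqrt 2) ^ (1 - β) := Real.rpow_pos_of_pos h2u0 _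
        have hrβpos : (0:ℝ) < r ^ β := Real.rpow_pos_of_pos hr β
        rcases le_or_gt 0 β with hβ0 | hβ0
        · -- 0 ≤ β < 1
          have hrβ : r ^ β ≤ 2 ^ β * (a ^ β * c ^ β) := by
            calc r ^ β ≤ (2 * (a * c)) ^ β := Real.rpow_le_rpow hr.le hrac hβ0
              _ = 2 ^ β * (a * c) ^ β := Real.mul_rpow (by norm_num) (by positivity)
              _ = 2 ^ β * (a ^ β * c ^ β) := by rw [Real.mul_rpow ha0.le hc0.le]
          have h2β : (2:ℝ) ^ β ≤ 2 ^ (|β|) :=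
            Real.rpow_le_rpow_of_exponent_le (by norm_num) hβq
          have hcβ : c ^ β ≤ c ^ (2 * |β| + 1) :=
            Real.rpow_le_rpow_of_exponent_le hc (by linarith)
          have h69 : (3:ℝ) ^ (|β|) * 2 ^ (|β|) = 6 ^ (|β|) := by
            rw [← Real.mul_rpow (by norm_num) (by norm_num)]; norm_num
          have hcoef : |β| * (3 * 3 ^ (|β|) * 2 ^ (|β|)) ≤ (|β| + 1) * (50:ℝ) ^ (|β| + 2) := by
            have h6 := le_C_aux |β| hq0 (A := 3) (x := 6) (by norm_num) (by norm_num)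
              (by norm_num) (by norm_num)
            have : (3:ℝ) * 3 ^ (|β|) * 2 ^ (|β|) = 3 * 6 ^ (|β|) := by rw [mul_assoc, h69]
            rw [this]
            exact mul_le_mul (by linarith) h6 (by positivity) (by linarith)
          have hXpos : (0:ℝ) < 2 ^ (|β|) * (a ^ β * c ^ (2 * |β| + 1)) := by positivity
          calc |a ^ β - b ^ β| ≤ |β| * ((2 * Real.sqrt 2) ^ (1 - β) * r ^ β) * s := step1
            _ ≤ |β| * ((3 * 3 ^ (|β|)) * (2 ^ (|β|) * (a ^ β * c ^ (2 * |β| + 1)))) * s := by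
                apply mul_le_mul_of_nonneg_right _ hs0
                apply mul_le_mul_of_nonneg_left _ hq0
                have hr2 : r ^ β ≤ 2 ^ (|β|) * (a ^ β * c ^ (2 * |β| + 1)) := by
                  calc r ^ β ≤ 2 ^ β * (a ^ β * c ^ β) := hrβ
                    _ ≤ 2 ^ (|β|) * (a ^ β * c ^ (2 * |β| + 1)) := by
                        apply mul_le_mul h2β _ (by positivity) (by positivity)
                        exact mul_le_mul_of_nonneg_left hcβ hapow.le
                apply mul_le_mul (h2upow.trans (h3pow.trans_eq h3split)) hr2 hrβpos.le
                  (by positivity)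
            _ = (|β| * (3 * 3 ^ (|β|) * 2 ^ (|β|))) * s * (a ^ β * c ^ (2 * |β| + 1)) := by
                ring
            _ ≤ ((|β| + 1) * (50:ℝ) ^ (|β| + 2)) * s * (a ^ β * c ^ (2 * |β| + 1)) := by
                apply mul_le_mul_of_nonneg_right _ (by positivity)
                exact mul_le_mul_of_nonneg_right hcoef hs0
        · -- β < 0
          have habs : |β| = -β := abs_of_neg hβ0
          have hcr : c < r := lt_of_lt_of_le hc_lt (le_trans (by linarith) hdivle)
          have ha3r : a / 3 ≤ r := by linarith
          have ha30 : (0:ℝ) < a / 3 := by positivity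
          have hrβa : r ^ β ≤ (a / 3) ^ β :=
            Real.rpow_le_rpow_of_nonpos ha30 ha3r hβ0.le
          have he3 : (a / 3 : ℝ) ^ β = a ^ β * 3 ^ (|β|) := by
            rw [Real.div_rpow ha0.le (by norm_num), div_eq_mul_inv,
              ← Real.rpow_neg (by norm_num), habs]
          have hc1' : (1:ℝ) ≤ c ^ (2 * |β| + 1) := Real.one_le_rpow hc (by linarith)
          have hr2 : r ^ β ≤ 3 ^ (|β|) * (a ^ β * c ^ (2 * |β| + 1)) := by
            calc r ^ β ≤ a ^ β * 3 ^ (|β|) := hrβa.trans_eq he3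
              _ ≤ (a ^ β * c ^ (2 * |β| + 1)) * 3 ^ (|β|) := by
                  apply mul_le_mul_of_nonneg_right _ (by positivity)
                  have h4' := mul_le_mul_of_nonneg_left hc1' hapow.le
                  rw [mul_one] at h4'
                  linarith
              _ = 3 ^ (|β|) * (a ^ β * c ^ (2 * |β| + 1)) := by ring
          have h99 : (3:ℝ) ^ (|β|) * 3 ^ (|β|) = 9 ^ (|β|) := by
            rw [← Real.mul_rpow (by norm_num) (by norm_num)]; norm_num
          have hcoef : |β| * (3 * 3 ^ (|β|) * 3 ^ (|β|)) ≤ (|β| + 1) * (50:ℝ) ^ (|β| + 2) := by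
            have h9 := le_C_aux |β| hq0 (A := 3) (x := 9) (by norm_num) (by norm_num)
              (by norm_num) (by norm_num)
            have : (3:ℝ) * 3 ^ (|β|) * 3 ^ (|β|) = 3 * 9 ^ (|β|) := by rw [mul_assoc, h99]
            rw [this]
            exact mul_le_mul (by linarith) h9 (by positivity) (by linarith)
          calc |a ^ β - b ^ β| ≤ |β| * ((2 * Real.sqrt 2) ^ (1 - β) * r ^ β) * s := step1
            _ ≤ |β| * ((3 * 3 ^ (|β|)) * (3 ^ (|β|) * (a ^ β * c ^ (2 * |β| + 1)))) * s := by
                apply mul_le_mul_of_nonneg_right _ hs0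
                apply mul_le_mul_of_nonneg_left _ hq0
                exact mul_le_mul (h2upow.trans (h3pow.trans_eq h3split)) hr2 hrβpos.le
                  (by positivity)
            _ = (|β| * (3 * 3 ^ (|β|) * 3 ^ (|β|))) * s * (a ^ β * c ^ (2 * |β| + 1)) := by
                ring
            _ ≤ ((|β| + 1) * (50:ℝ) ^ (|β| + 2)) * s * (a ^ β * c ^ (2 * |β| + 1)) := by
                apply mul_le_mul_of_nonneg_right _ (by positivity)
                exact mul_le_mul_of_nonneg_right hcoef hs0
  · -- r ≤ 1
    have hr1 : r ≤ 1 := not_lt.mp h1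
    simp only [if_neg h1, if_pos hr1, mul_zero, zero_add, mul_one]
    have hrs1 : r * s ≤ 1 := by nlinarith
    have hd1 : a - b ≤ r * s := (le_abs_self _).trans hab
    have hd2 : b - a ≤ r * s := by
      have h' : |b - a| ≤ r * s := by rwa [abs_sub_comm]
      linarith [le_abs_self (b - a)]
    have hab2 : a / 2 ≤ b := by rcases le_total a 2 with h | h <;> linarith
    have hb2a : b ≤ 2 * a := by linarith
    have key := rpow_deriv_bound (β := β) (m := a / 2) (M := 2 * a) (a := a) (b := b)
      (by positivity) (by linarith) hab2 (by linarith) hb2a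
    have h2e : (2:ℝ) ^ (-(β - 1)) ≤ 2 ^ (|β| + 1) :=
      Real.rpow_le_rpow_of_exponent_le (by norm_num) (by linarith)
    have hL : (a / 2) ^ (β - 1) ≤ 2 ^ (|β| + 1) * a ^ (β - 1) := by
      rw [Real.div_rpow ha0.le (by norm_num), div_eq_mul_inv, ← Real.rpow_neg (by norm_num)]
      calc a ^ (β - 1) * 2 ^ (-(β - 1)) ≤ a ^ (β - 1) * 2 ^ (|β| + 1) :=
            mul_le_mul_of_nonneg_left h2e hapow1.le
        _ = 2 ^ (|β| + 1) * a ^ (β - 1) := by ring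
    have hR : (2 * a) ^ (β - 1) ≤ 2 ^ (|β| + 1) * a ^ (β - 1) := by
      rw [Real.mul_rpow (by norm_num) ha0.le]
      apply mul_le_mul_of_nonneg_right _ hapow1.le
      exact Real.rpow_le_rpow_of_exponent_le (by norm_num) (by linarith)
    have hmax : max ((a / 2) ^ (β - 1)) ((2 * a) ^ (β - 1)) ≤ 2 ^ (|β| + 1) * a ^ (β - 1) :=
      max_le hL hR
    have hcoef : |β| * 2 ^ (|β| + 1) ≤ (|β| + 1) * (50:ℝ) ^ (|β| + 2) := by
      have h21 : (2:ℝ) ^ (|β| + 1) = 2 * 2 ^ (|β|) := by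
        rw [Real.rpow_add (by norm_num), Real.rpow_one]; ring
      have h2' := le_C_aux |β| hq0 (A := 2) (x := 2) (by norm_num) (by norm_num)
        (by norm_num) (by norm_num)
      calc |β| * 2 ^ (|β| + 1) = |β| * (2 * 2 ^ (|β|)) := by rw [h21]
        _ ≤ (|β| + 1) * (50:ℝ) ^ (|β| + 2) :=
            mul_le_mul (by linarith) h2' (by positivity) (by linarith)
    calc |a ^ β - b ^ β| ≤ |β| * max ((a / 2) ^ (β - 1)) ((2 * a) ^ (β - 1)) * |a - b| := key
      _ ≤ |β| * (2 ^ (|β| + 1) * a ^ (β - 1)) * (r * s) :=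
          mul_le_mul (mul_le_mul_of_nonneg_left hmax hq0) hab (abs_nonneg _) (by positivity)
      _ = (|β| * 2 ^ (|β| + 1)) * s * (a ^ (β - 1) * r) := by ring
      _ ≤ ((|β| + 1) * (50:ℝ) ^ (|β| + 2)) * s * (a ^ (β - 1) * r) := by
          apply mul_le_mul_of_nonneg_right _ (by positivity)
          exact mul_le_mul_of_nonneg_right hcoef hs0


lemma one_le_jap (v : V3) : 1 ≤ jap v := by
  rw [jap]
  calc (1:ℝ) = Real.sqrt 1 := Real.sqrt_one.symm
    _ ≤ _ := Real.sqrt_le_sqrt (by nlinarith [sq_nonneg ‖v‖])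

lemma norm_le_jap (v : V3) : ‖v‖ ≤ jap v := by
  rw [jap]
  calc ‖v‖ = Real.sqrt (‖v‖ ^ 2) := (Real.sqrt_sq (norm_nonneg v)).symm
    _ ≤ _ := Real.sqrt_le_sqrt (by linarith)

lemma jap_le (v : V3) : jap v ≤ 1 + ‖v‖ := by
  rw [jap]
  calc Real.sqrt (1 + ‖v‖ ^ 2) ≤ Real.sqrt ((1 + ‖v‖) ^ 2) :=
        Real.sqrt_le_sqrt (by nlinarith [norm_nonneg v])
    _ = 1 + ‖v‖ := Real.sqrt_sq (by positivity)

lemma jap_lip (v w : V3) : |jap v - jap w| ≤ ‖v - w‖ :=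
  (sqrt_one_add_sq_lip (norm_nonneg v) (norm_nonneg w)).trans
    ((abs_norm_sub_norm_le v w).trans (le_refl _))

end BWaux

set_option maxHeartbeats 800000 in
/-- pointwise estimate on the difference of bracket weights along a
collision (estimate `wet`). -/
theorem bracket_weight_collision_difference
    (β : ℝ) :
    ∃ C : ℝ, 0 < C ∧ ∀ v vs σ : V3, v ≠ vs → σ ∈ Metric.sphere (0 : V3) 1 →
      0 ≤ ⟪‖v - vs‖⁻¹ • (v - vs), σ⟫_ℝ →
      |jap v ^ β - jap (vPost v vs σ) ^ β| ≤
        C * Real.sin (dev v vs σ / 2) *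
          (jap v ^ β * jap vs ^ (2 * |β| + 1) * (if 1 < ‖v - vs‖ then 1 else 0)
            + jap v ^ (β - 1) * ‖v - vs‖ * (if ‖v - vs‖ ≤ 1 then 1 else 0)) := by
  refine ⟨(|β| + 1) * (50 : ℝ) ^ (|β| + 2), by positivity, ?_⟩
  intro v vs σ hne hσ ht0
  have hσn : ‖σ‖ = 1 := by simpa using mem_sphere_zero_iff_norm.mp hσ
  have hd : v - vs ≠ 0 := sub_ne_zero.mpr hne
  have hr : 0 < ‖v - vs‖ := norm_pos_iff.mpr hd
  set t := ⟪(‖v - vs‖)⁻¹ • (v - vs), σ⟫_ℝ with htdef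
  have hinner : ⟪v - vs, σ⟫_ℝ = ‖v - vs‖ * t := by
    rw [htdef, real_inner_smul_left]
    field_simp
  have hknorm : ‖(‖v - vs‖)⁻¹ • (v - vs)‖ = 1 := by
    rw [norm_smul, norm_inv, norm_norm]
    field_simp
  have ht1 : t ≤ 1 := by
    have h := real_inner_le_norm ((‖v - vs‖)⁻¹ • (v - vs)) σ
    rw [hknorm, hσn, one_mul] at h
    exact h
  have hdev0 : 0 ≤ dev v vs σ := Real.arccos_nonneg _
  have hdevpi : dev v vs σ ≤ Real.pi := Real.arccos_le_pi _
  have hcos : Real.cos (dev v vs σ) = t := Real.cos_arccos (by linarith) ht1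
  set s := Real.sin (dev v vs σ / 2) with hsdef
  have hs_eq : s = Real.sqrt ((1 - t) / 2) := by
    rw [hsdef, Real.sin_half_eq_sqrt hdev0 (by linarith [Real.pi_pos]), hcos]
  have hs0 : 0 ≤ s := by rw [hs_eq]; positivity
  have hs1 : s ≤ 1 := Real.sin_le_one _
  have hs2 : s ^ 2 = (1 - t) / 2 := by
    rw [hs_eq]; exact Real.sq_sqrt (by linarith)
  -- decompositions
  have hv'v : vPost v vs σ - v = (‖v - vs‖ / 2) • σ - (2:ℝ)⁻¹ • (v - vs) := by
    simp only [vPost]; module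
  have hv'vs : vPost v vs σ - vs = (2:ℝ)⁻¹ • (v - vs) + (‖v - vs‖ / 2) • σ := by
    simp only [vPost]; module
  have hA : ‖(‖v - vs‖ / 2) • σ‖ = ‖v - vs‖ / 2 := by
    rw [norm_smul, Real.norm_eq_abs, hσn, mul_one, abs_of_nonneg (by positivity)]
  have hB : ‖(2:ℝ)⁻¹ • (v - vs)‖ = ‖v - vs‖ / 2 := by
    rw [norm_smul, Real.norm_eq_abs, abs_of_nonneg (by norm_num : (0:ℝ) ≤ (2:ℝ)⁻¹)]
    ring
  have hip : ⟪(‖v - vs‖ / 2) • σ, (2:ℝ)⁻¹ • (v - vs)⟫_ℝ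
      = (‖v - vs‖ / 2) * ((2:ℝ)⁻¹ * (‖v - vs‖ * t)) := by
    rw [real_inner_smul_left, real_inner_smul_right, real_inner_comm, hinner]
  have hip2 : ⟪(2:ℝ)⁻¹ • (v - vs), (‖v - vs‖ / 2) • σ⟫_ℝ
      = (2:ℝ)⁻¹ * ((‖v - vs‖ / 2) * (‖v - vs‖ * t)) := by
    rw [real_inner_smul_left, real_inner_smul_right, hinner]
  have hnormsq1 : ‖vPost v vs σ - v‖ ^ 2 = (‖v - vs‖ * s) ^ 2 := by
    rw [hv'v, norm_sub_sq_real, hip, hA, hB, mul_pow, hs2]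
    ring
  have hnorm1 : ‖vPost v vs σ - v‖ = ‖v - vs‖ * s := by
    calc ‖vPost v vs σ - v‖ = Real.sqrt (‖vPost v vs σ - v‖ ^ 2) :=
          (Real.sqrt_sq (norm_nonneg _)).symm
      _ = Real.sqrt ((‖v - vs‖ * s) ^ 2) := by rw [hnormsq1]
      _ = ‖v - vs‖ * s := Real.sqrt_sq (by positivity)
  have hnormsq2 : (‖v - vs‖ / Real.sqrt 2) ^ 2 ≤ ‖vPost v vs σ - vs‖ ^ 2 := by
    rw [hv'vs, norm_add_sq_real, hip2, hA, hB, div_pow, Real.sq_sqrt (by norm_num : (0:ℝ) ≤ 2)]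
    nlinarith [mul_nonneg (mul_nonneg hr.le hr.le) ht0]
  have hnorm2 : ‖v - vs‖ / Real.sqrt 2 ≤ ‖vPost v vs σ - vs‖ := by
    calc ‖v - vs‖ / Real.sqrt 2 = Real.sqrt ((‖v - vs‖ / Real.sqrt 2) ^ 2) :=
          (Real.sqrt_sq (by positivity)).symm
      _ ≤ Real.sqrt (‖vPost v vs σ - vs‖ ^ 2) := Real.sqrt_le_sqrt hnormsq2
      _ = ‖vPost v vs σ - vs‖ := Real.sqrt_sq (norm_nonneg _)
  -- jap facts
  have ha1 : 1 ≤ jap v := BWaux.one_le_jap v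
  have hb1 : 1 ≤ jap (vPost v vs σ) := BWaux.one_le_jap _
  have hc1 : 1 ≤ jap vs := BWaux.one_le_jap vs
  have hna : ‖v‖ ≤ jap v := BWaux.norm_le_jap v
  have hnb : ‖vPost v vs σ‖ ≤ jap (vPost v vs σ) := BWaux.norm_le_jap _
  have hnc : ‖vs‖ ≤ jap vs := BWaux.norm_le_jap vs
  have hab : |jap v - jap (vPost v vs σ)| ≤ ‖v - vs‖ * s := by
    calc |jap v - jap (vPost v vs σ)| ≤ ‖v - vPost v vs σ‖ := BWaux.jap_lip _ _
      _ = ‖vPost v vs σ - v‖ := norm_sub_rev _ _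
      _ = ‖v - vs‖ * s := hnorm1
  have hv'norm : ‖vPost v vs σ‖ ≤ ‖v‖ + ‖vs‖ := by
    have h1 : ‖vPost v vs σ‖ ≤ ‖(2:ℝ)⁻¹ • (v + vs)‖ + ‖(‖v - vs‖ / 2) • σ‖ := by
      rw [vPost]; exact norm_add_le _ _
    have h2 : ‖(2:ℝ)⁻¹ • (v + vs)‖ = ‖v + vs‖ / 2 := by
      rw [norm_smul, Real.norm_eq_abs, abs_of_nonneg (by norm_num : (0:ℝ) ≤ (2:ℝ)⁻¹)]
      ring
    rw [h2, hA] at h1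
    have h3 : ‖v + vs‖ ≤ ‖v‖ + ‖vs‖ := norm_add_le v vs
    have h4 : ‖v - vs‖ ≤ ‖v‖ + ‖vs‖ := norm_sub_le v vs
    linarith
  have hvnorm : ‖v‖ ≤ ‖v - vs‖ + ‖vs‖ := by
    calc ‖v‖ = ‖(v - vs) + vs‖ := by rw [sub_add_cancel]
      _ ≤ ‖v - vs‖ + ‖vs‖ := norm_add_le _ _
  have h5 : (1:ℝ) ≤ jap v * jap vs := by
    have h := mul_le_mul ha1 hc1 zero_le_one (by linarith : (0:ℝ) ≤ jap v)
    linarith [h]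
  have h6 : jap v ≤ jap v * jap vs := le_mul_of_one_le_right (by linarith) hc1
  have h7 : jap vs ≤ jap v * jap vs := le_mul_of_one_le_left (by linarith) ha1
  have hbM : jap (vPost v vs σ) ≤ 3 * (jap v * jap vs) := by
    have h1 : jap (vPost v vs σ) ≤ 1 + ‖vPost v vs σ‖ := BWaux.jap_le _
    linarith
  have hmb : ‖v - vs‖ / Real.sqrt 2 - jap vs ≤ jap (vPost v vs σ) := by
    have h1 : ‖vPost v vs σ - vs‖ ≤ ‖vPost v vs σ‖ + ‖vs‖ := norm_sub_le _ _
    linarith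
  have hma : ‖v - vs‖ - jap vs ≤ jap v := by
    have h4 : ‖v - vs‖ ≤ ‖v‖ + ‖vs‖ := norm_sub_le v vs
    linarith
  have hrac : ‖v - vs‖ ≤ 2 * (jap v * jap vs) := by
    have h4 : ‖v - vs‖ ≤ ‖v‖ + ‖vs‖ := norm_sub_le v vs
    linarith
  have harc : jap v ≤ 1 + ‖v - vs‖ + jap vs := by
    have h1 : jap v ≤ 1 + ‖v‖ := BWaux.jap_le v
    linarith
  exact BWaux.core β (jap v) (jap (vPost v vs σ)) (jap vs) ‖v - vs‖ s ha1 hb1 hc1 hr hs0 hs1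
    hab hbM hmb hma hrac harc


end
end
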